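/- A nonzero GEDM D satisfies 1'D†1 > 0 if and only if D is a circum GEDM, i.e., there exist a, b > 0 and vectors x^1,...,x^n lying on a common hypersphere with sum x^i = 0 such that d_ij = ||a x^i - b x^j||². -/

import Mathlib

/-!
Expanding `d_ij = a²‖xᵢ‖² + b²‖xⱼ‖² - 2ab⟪xᵢ, xⱼ⟫` shows that a vector `w` with `∑ wᵢ ≠ 0` and
`D w` constant forces `‖xᵢ‖² = 2⟪xᵢ, c⟫ + t` for all `i`, i.e. the points lie on a sphere about
`c`; summing over `i` with `∑ xᵢ = 0` gives `t > 0`. If `1ᵀD†1 > 0`, then either `DD†1 = 1` and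
`w = D†1` has `∑ wᵢ = 1ᵀD†1 > 0`, or `l = 1 - DD†1` lies in `ker Dᵀ` and, being orthogonal to
`DD†1`, has `∑ lᵢ = ‖l‖² ≠ 0`; and `Dᵀ` is the GEDM of the same points with `a` and `b` swapped.
Conversely, on a sphere whose centre `c` is taken in the span of the points (project it), an
affine combination `y` of the points with `∑ yⱼ xⱼ` proportional to `c` makes `D y` constant, and
likewise for `Dᵀ`; then `1 = Dy = Dᵀy'` and `1ᵀD†1 = y'ᵀDD†Dy = 1ᵀy > 0`.
-/

open Matrix

/-- `Dp` is the Moore-Penrose inverse of `D`. -/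
def IsMoorePenrose {n : ℕ} (D Dp : Matrix (Fin n) (Fin n) ℝ) : Prop :=
  D * Dp * D = D ∧ Dp * D * Dp = Dp ∧ (D * Dp)ᵀ = D * Dp ∧ (Dp * D)ᵀ = Dp * D

section PseudoInverse

variable {ι R : Type*} [Fintype ι] {D Dp : Matrix ι ι R}

lemma dotProduct_pinv_mulVec_eq [CommRing R] (hDD : D * Dp * D = D) {u w y y' : ι → R}
    (hy : D *ᵥ y = u) (hy' : Dᵀ *ᵥ y' = w) : w ⬝ᵥ (Dp *ᵥ u) = w ⬝ᵥ y :=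
  calc w ⬝ᵥ (Dp *ᵥ u) = y' ⬝ᵥ ((D * Dp * D) *ᵥ y) := by
        rw [← hy, ← hy', mulVec_transpose, ← dotProduct_mulVec, mulVec_mulVec, mulVec_mulVec]
    _ = w ⬝ᵥ y := by rw [hDD, dotProduct_mulVec, ← mulVec_transpose, hy']

lemma exists_sum_ne_zero_mulVec_eq_one_or_transpose_mulVec_eq_zero
    [Field R] [LinearOrder R] [IsStrictOrderedRing R]
    (hDD : D * Dp * D = D) (hP : (D * Dp)ᵀ = D * Dp) (hpos : 0 < 1 ⬝ᵥ (Dp *ᵥ 1)) :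
    ∃ w : ι → R, ∑ i, w i ≠ 0 ∧ (D *ᵥ w = 1 ∨ Dᵀ *ᵥ w = 0) := by
  set P := D * Dp
  have hPP : P * P = P := by rw [← mul_assoc, hDD]
  set l : ι → R := 1 - P *ᵥ 1
  have hDl : Dᵀ *ᵥ l = 0 := by
    have : Dᵀ * P = Dᵀ := by rw [← hP, ← transpose_mul, hDD]
    rw [mulVec_sub, mulVec_mulVec, this, sub_self]
  by_cases hl : ∑ i, l i = 0
  · have hPl : P *ᵥ l = 0 := by rw [mulVec_sub, mulVec_mulVec, hPP, sub_self]
    have hll : l ⬝ᵥ l = 0 := by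
      rw [sub_dotProduct, dotProduct_comm (P *ᵥ 1), dotProduct_mulVec, ← mulVec_transpose, hP,
        hPl, zero_dotProduct, sub_zero]
      simpa [dotProduct] using hl
    refine ⟨Dp *ᵥ 1, ?_, Or.inl ?_⟩
    · simpa [dotProduct] using hpos.ne'
    · rw [mulVec_mulVec]
      exact (sub_eq_zero.mp (dotProduct_self_eq_zero.mp hll)).symm
  · exact ⟨l, hl, Or.inr hDl⟩

end PseudoInverse

open RealInnerProductSpace

section GEDM

variable {ι E : Type*} [NormedAddCommGroup E] [InnerProductSpace ℝ E]

lemma norm_smul_sub_smul_sq (a b : ℝ) (p q : E) :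
    ‖a • p - b • q‖ ^ 2 = a ^ 2 * ‖p‖ ^ 2 + b ^ 2 * ‖q‖ ^ 2 - 2 * (a * b) * ⟪p, q⟫ := by
  rw [norm_sub_sq_real, real_inner_smul_left, real_inner_smul_right, norm_smul, norm_smul,
    mul_pow, mul_pow, Real.norm_eq_abs, Real.norm_eq_abs, sq_abs, sq_abs]
  ring

def IsGEDMOf (D : Matrix ι ι ℝ) (a b : ℝ) (x : ι → E) : Prop :=
  ∀ i j, D i j = ‖a • x i - b • x j‖ ^ 2

namespace IsGEDMOf

variable {D : Matrix ι ι ℝ} {a b : ℝ} {x : ι → E}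

lemma transpose (hD : IsGEDMOf D a b x) : IsGEDMOf Dᵀ b a x := fun i j => by
  rw [transpose_apply, hD, norm_sub_rev]

lemma exists_ne_zero (hD : IsGEDMOf D a b x) (hD0 : D ≠ 0) : ∃ i, x i ≠ 0 := by
  by_contra! hx
  exact hD0 (Matrix.ext fun i j => by simp [hD i j, hx])

variable [Fintype ι]

lemma mulVec_apply (hD : IsGEDMOf D a b x) (w : ι → ℝ) (i : ι) :
    (D *ᵥ w) i = a ^ 2 * ‖x i‖ ^ 2 * ∑ j, w j + b ^ 2 * ∑ j, ‖x j‖ ^ 2 * w j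
      - 2 * (a * b) * ⟪x i, ∑ j, w j • x j⟫ := by
  simp only [mulVec, dotProduct, hD _, norm_smul_sub_smul_sq, inner_sum, real_inner_smul_right,
    Finset.mul_sum, ← Finset.sum_add_distrib, ← Finset.sum_sub_distrib]
  exact Finset.sum_congr rfl fun j _ => by ring

lemma exists_norm_sq_eq_of_mulVec_eq_const (hD : IsGEDMOf D a b x) (ha : a ≠ 0) {w : ι → ℝ}
    (hw : ∑ j, w j ≠ 0) {k : ℝ} (hDw : D *ᵥ w = fun _ => k) :
    ∃ c t, ∀ i, ‖x i‖ ^ 2 = 2 * ⟪x i, c⟫ + t := by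
  refine ⟨(b / (a * ∑ j, w j)) • ∑ j, w j • x j,
    (k - b ^ 2 * ∑ j, ‖x j‖ ^ 2 * w j) / (a ^ 2 * ∑ j, w j), fun i => ?_⟩
  have hi := hD.mulVec_apply w i
  rw [hDw] at hi
  rw [real_inner_smul_right]
  field_simp
  linear_combination -hi

end IsGEDMOf

variable [Fintype ι] {x : ι → E} {c : E} {t : ℝ}

lemma pos_of_norm_sq_eq_inner_add (hsum : ∑ i, x i = 0) (hx : ∃ i, x i ≠ 0)
    (h : ∀ i, ‖x i‖ ^ 2 = 2 * ⟪x i, c⟫ + t) : 0 < t := by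
  obtain ⟨i₀, hi₀⟩ := hx
  have hpos : 0 < ∑ i, ‖x i‖ ^ 2 :=
    Finset.sum_pos' (fun i _ => by positivity) ⟨i₀, Finset.mem_univ _, by positivity⟩
  have : ∑ i, ‖x i‖ ^ 2 = Fintype.card ι * t := by
    simp only [h, Finset.sum_add_distrib, ← Finset.mul_sum, ← sum_inner, hsum, inner_zero_left,
      Finset.sum_const, Finset.card_univ, nsmul_eq_mul]
    ring
  rw [this] at hpos
  exact pos_of_mul_pos_right hpos (Nat.cast_nonneg _)

lemma exists_sphere_of_norm_sq_eq_inner_add (hsum : ∑ i, x i = 0) (hx : ∃ i, x i ≠ 0)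
    (h : ∀ i, ‖x i‖ ^ 2 = 2 * ⟪x i, c⟫ + t) :
    ∃ (v : E) (r : ℝ), 0 < r ∧ ∀ i, ‖x i - v‖ ^ 2 = r := by
  refine ⟨c, t + ‖c‖ ^ 2, by have := pos_of_norm_sq_eq_inner_add hsum hx h; positivity,
    fun i => ?_⟩
  rw [norm_sub_sq_real, h i]
  ring

lemma exists_mem_span_norm_sq_eq_inner_add {v : E} {r : ℝ} (h : ∀ i, ‖x i - v‖ ^ 2 = r) :
    ∃ c ∈ Submodule.span ℝ (Set.range x), ∀ i, ‖x i‖ ^ 2 = 2 * ⟪x i, c⟫ + (r - ‖v‖ ^ 2) := by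
  set K := Submodule.span ℝ (Set.range x)
  have : FiniteDimensional ℝ K := FiniteDimensional.span_of_finite ℝ (Set.finite_range x)
  refine ⟨K.starProjection v, K.starProjection_apply_mem v, fun i => ?_⟩
  have hperp := K.starProjection_inner_eq_zero v (x i) (Submodule.subset_span ⟨i, rfl⟩)
  rw [inner_sub_left, real_inner_comm, real_inner_comm (x i)] at hperp
  have hi := h i
  rw [norm_sub_sq_real] at hi
  linarith

lemma exists_sum_eq_sum_smul_eq {K M : Type*} [Field K] [CharZero K] [AddCommGroup M]
    [Module K M] [Nonempty ι] {x : ι → M} (hsum : ∑ i, x i = 0) {c : M}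
    (hc : c ∈ Submodule.span K (Set.range x)) (s : K) :
    ∃ y : ι → K, ∑ i, y i = s ∧ ∑ i, y i • x i = c := by
  obtain ⟨q, hq⟩ := (Submodule.mem_span_range_iff_exists_fun K).mp hc
  have hcard : (Fintype.card ι : K) ≠ 0 := Nat.cast_ne_zero.mpr Fintype.card_ne_zero
  refine ⟨fun i => q i + (s - ∑ j, q j) / Fintype.card ι, ?_, ?_⟩
  · simp only [Finset.sum_add_distrib, Finset.sum_const, Finset.card_univ, nsmul_eq_mul]
    field_simp
    ring
  · simp only [add_smul, Finset.sum_add_distrib, ← Finset.smul_sum, hsum, smul_zero, add_zero, hq]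

namespace IsGEDMOf

variable {D : Matrix ι ι ℝ} {a b : ℝ}

lemma exists_mulVec_eq_one_of_sphere (hD : IsGEDMOf D a b x) (ha : 0 < a) (hb : 0 < b)
    (hsum : ∑ i, x i = 0) (hx : ∃ i, x i ≠ 0) {v : E} {r : ℝ} (hsph : ∀ i, ‖x i - v‖ ^ 2 = r) :
    ∃ y : ι → ℝ, D *ᵥ y = 1 ∧ 0 < ∑ i, y i := by
  obtain ⟨c, hc, hcx⟩ := exists_mem_span_norm_sq_eq_inner_add hsph
  set t := r - ‖v‖ ^ 2
  have ht : 0 < t := pos_of_norm_sq_eq_inner_add hsum hx hcx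
  set γ := (a ^ 2 + b ^ 2) * t + 2 * (a * b) * ‖c‖ ^ 2
  have hγ : 0 < γ := by positivity
  have : Nonempty ι := let ⟨i, _⟩ := hx; ⟨i⟩
  obtain ⟨y, hy, hyx⟩ := exists_sum_eq_sum_smul_eq hsum
    (Submodule.smul_mem _ (γ⁻¹ * (a / b)) hc) γ⁻¹
  have hyn : ∑ j, ‖x j‖ ^ 2 * y j = 2 * (γ⁻¹ * (a / b)) * ‖c‖ ^ 2 + t * γ⁻¹ :=
    calc ∑ j, ‖x j‖ ^ 2 * y j = ∑ j, (2 * ⟪y j • x j, c⟫ + t * y j) :=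
          Finset.sum_congr rfl fun j _ => by rw [hcx, real_inner_smul_left]; ring
      _ = 2 * ⟪∑ j, y j • x j, c⟫ + t * ∑ j, y j := by
          rw [Finset.sum_add_distrib, ← Finset.mul_sum, ← Finset.mul_sum, sum_inner]
      _ = _ := by rw [hyx, hy, real_inner_smul_left, real_inner_self_eq_norm_sq]; ring
  refine ⟨y, funext fun i => ?_, hy ▸ inv_pos.mpr hγ⟩
  rw [hD.mulVec_apply, hy, hyx, hyn, real_inner_smul_right, hcx i]
  simp only [Pi.one_apply]
  field_simp
  ring

end IsGEDMOf

end GEDM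

theorem stmt16 (n : ℕ) (D : Matrix (Fin n) (Fin n) ℝ)
    (hD : ∃ a b : ℝ, 0 < a ∧ 0 < b ∧
      ∃ (m : ℕ) (x : Fin n → EuclideanSpace ℝ (Fin m)),
        (∑ j, x j) = 0 ∧ ∀ i j, D i j = ‖a • x i - b • x j‖ ^ 2)
    (hD0 : D ≠ 0)
    (Dp : Matrix (Fin n) (Fin n) ℝ) (hDp : IsMoorePenrose D Dp) :
    0 < (fun _ => (1 : ℝ)) ⬝ᵥ (Dp *ᵥ fun _ => (1 : ℝ)) ↔
    ∃ a b : ℝ, 0 < a ∧ 0 < b ∧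
      ∃ (m : ℕ) (x : Fin n → EuclideanSpace ℝ (Fin m)),
        (∑ j, x j) = 0 ∧
        (∃ (v : EuclideanSpace ℝ (Fin m)) (r : ℝ), 0 < r ∧ ∀ i, ‖x i - v‖ ^ 2 = r) ∧
        ∀ i j, D i j = ‖a • x i - b • x j‖ ^ 2 := by
  obtain ⟨hDD, -, hP, -⟩ := hDp
  constructor
  · intro hpos
    obtain ⟨a, b, ha, hb, m, x, hsum, hD⟩ := hD
    have hD' : IsGEDMOf D a b x := hD
    obtain ⟨c, t, hct⟩ : ∃ c t, ∀ i, ‖x i‖ ^ 2 = 2 * ⟪x i, c⟫ + t := by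
      obtain ⟨w, hw, hDw | hDw⟩ :=
        exists_sum_ne_zero_mulVec_eq_one_or_transpose_mulVec_eq_zero hDD hP hpos
      · exact hD'.exists_norm_sq_eq_of_mulVec_eq_const ha.ne' hw hDw
      · exact hD'.transpose.exists_norm_sq_eq_of_mulVec_eq_const hb.ne' hw hDw
    exact ⟨a, b, ha, hb, m, x, hsum,
      exists_sphere_of_norm_sq_eq_inner_add hsum (hD'.exists_ne_zero hD0) hct, hD⟩
  · rintro ⟨a, b, ha, hb, m, x, hsum, ⟨v, r, -, hsph⟩, hD⟩
    have hD' : IsGEDMOf D a b x := hD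
    have hx := hD'.exists_ne_zero hD0
    obtain ⟨y, hy, hypos⟩ := hD'.exists_mulVec_eq_one_of_sphere ha hb hsum hx hsph
    obtain ⟨y', hy', -⟩ := hD'.transpose.exists_mulVec_eq_one_of_sphere hb ha hsum hx hsph
    show 0 < (1 : Fin n → ℝ) ⬝ᵥ (Dp *ᵥ 1)
    rw [dotProduct_pinv_mulVec_eq hDD hy hy']
    simpa [dotProduct] using hypos
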